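/- arXiv:1606.03132 — 3 statements merged into one kernel-verified Lean document; each statement's English description precedes it below -/
import Mathlib

section
/- Let (c_n) be a sequence in (ℝ^d)* converging to c ∈ (ℝ^d)*. Then for every ε > 0 and every (x,y) ∈ ℝ^d × ℝ^d, there exists N₀ ∈ ℕ such that for all n ≥ N₀, π_{c_n}(x,y) ≤ ε + π_c(x,y). -/
noncomputable section

/-- Configuration space `ℝ^d` with the Euclidean norm. -/
abbrev Ed (d : ℕ) := EuclideanSpace ℝ (Fin d)

/-- The point of `ℝ^d` with integer coordinates given by `r ∈ ℤ^d`. -/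
def intVec (d : ℕ) (r : Fin d → ℤ) : Ed d := WithLp.toLp 2 (fun i => (r i : ℝ))

/-- A generating function: a `C²` map `S : ℝ^d × ℝ^d → ℝ` which is `ℤ^d`-periodic for
the diagonal action and satisfies the uniform twist condition
`∑_{i,j} ∂²S/∂xᵢ∂yⱼ (x,y) ξᵢ ξⱼ ≤ -A‖ξ‖²` (expressed via the second derivative of `S`
applied to `((ξ,0),(0,ξ))`). -/
def IsGenFn {d : ℕ} (S : Ed d × Ed d → ℝ) : Prop :=
  ContDiff ℝ 2 S ∧
  (∀ (r : Fin d → ℤ) (x y : Ed d), S (x + intVec d r, y + intVec d r) = S (x, y)) ∧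
  ∃ A : ℝ, 0 < A ∧ ∀ (x y ξ : Ed d),
    iteratedFDeriv ℝ 2 S (x, y) ![(ξ, 0), (0, ξ)] ≤ -A * ‖ξ‖ ^ 2

/-- `∂₁S`, the partial differential of `S` with respect to its first variable. -/
def D1 {d : ℕ} (S : Ed d × Ed d → ℝ) (x y : Ed d) : Ed d →L[ℝ] ℝ :=
  fderiv ℝ (fun z => S (z, y)) x

/-- `∂₂S`, the partial differential of `S` with respect to its second variable. -/
def D2 {d : ℕ} (S : Ed d × Ed d → ℝ) (x y : Ed d) : Ed d →L[ℝ] ℝ :=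
  fderiv ℝ (fun z => S (x, z)) y

/-- A bi-infinite sequence `(x_n)_{n∈ℤ}` is extremal if
`∂₂S(x_{n-1}, x_n) + ∂₁S(x_n, x_{n+1}) = 0` for every `n`. -/
def IsExtremal {d : ℕ} (S : Ed d × Ed d → ℝ) (u : ℤ → Ed d) : Prop :=
  ∀ n : ℤ, D2 S (u (n - 1)) (u n) + D1 S (u n) (u (n + 1)) = 0

/-- The action `S(x_0, …, x_n)` of a finite sequence. -/
def act {d : ℕ} (S : Ed d × Ed d → ℝ) (n : ℕ) (γ : ℕ → Ed d) : ℝ :=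
  ∑ k ∈ Finset.range n, S (γ k, γ (k + 1))

/-- The sequence `(x, z_1, …, z_{N-1}, y)` built from interior points `z`. -/
def path {d : ℕ} (x y : Ed d) (N : ℕ) (z : Fin (N - 1) → Ed d) : ℕ → Ed d :=
  fun k => if h0 : k = 0 then x else if h : k < N then z ⟨k - 1, by omega⟩ else y

/-- The fixed-endpoint action `S_{x,y,N} : (x_1, …, x_{N-1}) ↦ S(x, x_1, …, x_{N-1}, y)`. -/
def fixedAct {d : ℕ} (S : Ed d × Ed d → ℝ) (x y : Ed d) (N : ℕ) :
    (Fin (N - 1) → Ed d) → ℝ :=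
  fun z => act S N (path x y N z)

/-- `S` has no conjugate points: for all `x, y` and `N ≥ 2`, the fixed-endpoint action
`S_{x,y,N}` has exactly one critical point, and attains its global minimum there. -/
def NoConjPts {d : ℕ} (S : Ed d × Ed d → ℝ) : Prop :=
  ∀ (x y : Ed d) (N : ℕ), 2 ≤ N →
    ∃ z : Fin (N - 1) → Ed d,
      fderiv ℝ (fixedAct S x y N) z = 0 ∧
      (∀ w, fixedAct S x y N z ≤ fixedAct S x y N w) ∧
      (∀ z', fderiv ℝ (fixedAct S x y N) z' = 0 → z' = z)

/-- `A_N(x,y)`: the minimum of the fixed-endpoint action `S_{x,y,N}` for `N ≥ 2`,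
and `S(x,y)` for `N = 1`. -/
def AN {d : ℕ} (S : Ed d × Ed d → ℝ) (N : ℕ) (x y : Ed d) : ℝ :=
  if N ≤ 1 then S (x, y) else sInf (Set.range (fixedAct S x y N))

/-- The minimizing holonomic value `Σ̃(S)`. -/
def holVal {d : ℕ} (S : Ed d × Ed d → ℝ) : ℝ :=
  sInf { v : ℝ | ∃ n : ℕ, 1 ≤ n ∧ ∃ γ : ℕ → Ed d,
    (∃ r : Fin d → ℤ, γ n - γ 0 = intVec d r) ∧ v = act S n γ / n }

/-- The normalized action `S̃(x_0, …, x_n) = S(x_0, …, x_n) - n Σ̃(S)`. -/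
def actTilde {d : ℕ} (S : Ed d × Ed d → ℝ) (n : ℕ) (γ : ℕ → Ed d) : ℝ :=
  act S n γ - n * holVal S

/-- The Mañé potential `π(x,y)`. -/
def manePot {d : ℕ} (S : Ed d × Ed d → ℝ) (x y : Ed d) : ℝ :=
  sInf { v : ℝ | ∃ n : ℕ, 1 ≤ n ∧ ∃ γ : ℕ → Ed d,
    γ 0 = x ∧ (∃ r : Fin d → ℤ, γ n - y = intVec d r) ∧ v = actTilde S n γ }

/-- The Aubry set `Ā(S) ⊂ ℝ^d × ℝ^d`. -/
def aubry {d : ℕ} (S : Ed d × Ed d → ℝ) : Set (Ed d × Ed d) :=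
  { p | ∀ ε > 0, ∃ n : ℕ, 1 ≤ n ∧ ∃ γ : ℕ → Ed d,
      (∃ r : Fin d → ℤ, γ n - γ 0 = intVec d r) ∧
      ‖p.1 - γ 0‖ < ε ∧ ‖p.2 - γ 1‖ < ε ∧ actTilde S n γ < ε }

/-- The generating function `S_c(x,y) = S(x,y) + c(x - y)` associated to a cohomology
class `c ∈ (ℝ^d)*`. -/
def Sc {d : ℕ} (S : Ed d × Ed d → ℝ) (c : Ed d →L[ℝ] ℝ) : Ed d × Ed d → ℝ :=
  fun p => S p + c (p.1 - p.2)


/-! The twist condition gives `S(x, y) ≥ A/2 ‖y - x‖² - C₁ ‖y - x‖ - C₀`, so every `S_c` is bounded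
below and `Σ̃_c` is finite. As a function of `c` it is an infimum of the affine maps
`c ↦ (S(γ) + c(γ₀ - γₙ)) / n` over closed loops `γ`, hence concave, hence continuous on the
finite-dimensional space `(ℝ^d)*`. For a fixed near-minimizer `γ` of `π_c(x, y)` the normalized
action `S(γ) + c'(γ₀ - γₘ) - m Σ̃_{c'}` is therefore continuous in `c'`, and it bounds `π_{c'}(x, y)`. -/

open Set Filter Topology

lemma intVec_zero (d : ℕ) : intVec d 0 = 0 := by
  ext i; simp [intVec]

lemma exists_norm_le_of_periodic {d : ℕ} {F : Type*} [NormedAddCommGroup F] {f : Ed d → F}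
    (hf : Continuous f) (hper : ∀ (r : Fin d → ℤ) (z : Ed d), f (z + intVec d r) = f z) :
    ∃ C, ∀ z, ‖f z‖ ≤ C := by
  obtain ⟨C, hC⟩ := ((isCompact_Icc (a := (0 : Fin d → ℝ)) (b := 1)).image
    (PiLp.continuous_toLp 2 _)).exists_bound_of_continuousOn hf.continuousOn
  refine ⟨C, fun z => ?_⟩
  have hfract : z - intVec d (fun i => ⌊z i⌋) ∈ WithLp.toLp 2 '' Icc (0 : Fin d → ℝ) 1 :=
    ⟨fun i => Int.fract (z i),
      ⟨fun i => Int.fract_nonneg _, fun i => (Int.fract_lt_one _).le⟩, by ext i; simp [intVec]⟩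
  have hz := hper (fun i => ⌊z i⌋) (z - intVec d (fun i => ⌊z i⌋))
  rw [sub_add_cancel] at hz
  exact hz ▸ hC _ hfract

lemma fderiv_periodic {d : ℕ} {S : Ed d × Ed d → ℝ}
    (hper : ∀ (r : Fin d → ℤ) (x y : Ed d), S (x + intVec d r, y + intVec d r) = S (x, y))
    (r : Fin d → ℤ) (p : Ed d × Ed d) :
    fderiv ℝ S (p + (intVec d r, intVec d r)) = fderiv ℝ S p := by
  have hS : S = fun q => S (q + (intVec d r, intVec d r)) := funext fun q => (hper r q.1 q.2).symm
  conv_rhs => rw [hS]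
  exact (fderiv_comp_add_right _).symm

lemma hasDerivAt_comp_add_smul {E G : Type*} [NormedAddCommGroup E] [NormedSpace ℝ E]
    [NormedAddCommGroup G] [NormedSpace ℝ G] {F : E → G} (p v : E) {t : ℝ}
    (hF : DifferentiableAt ℝ F (p + t • v)) :
    HasDerivAt (fun s : ℝ => F (p + s • v)) (fderiv ℝ F (p + t • v) v) t := by
  have hline : HasDerivAt (fun s : ℝ => p + s • v) v t := by
    simpa using ((hasDerivAt_id t).smul_const v).const_add p
  exact hF.hasFDerivAt.comp_hasDerivAt t hline

lemma add_half_le_sub_of_le_deriv {f f' : ℝ → ℝ} {a b : ℝ} (hf : ∀ t, HasDerivAt f (f' t) t)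
    (hf' : ∀ t ∈ Icc (0 : ℝ) 1, a + b * t ≤ f' t) : a + b / 2 ≤ f 1 - f 0 := by
  have hg : ∀ t, HasDerivAt (fun t => f t - a * t - b / 2 * t ^ 2) (f' t - a - b * t) t :=
    fun t => (((hf t).sub ((hasDerivAt_id' t).const_mul a)).sub
      ((hasDerivAt_pow 2 t).const_mul (b / 2))).congr_deriv (by ring)
  have hmono : MonotoneOn (fun t => f t - a * t - b / 2 * t ^ 2) (Icc 0 1) :=
    monotoneOn_of_hasDerivWithinAt_nonneg (convex_Icc 0 1)
      (fun t _ => (hg t).continuousAt.continuousWithinAt)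
      (fun t _ => (hg t).hasDerivWithinAt)
      (fun t ht => by linarith [hf' t (interior_subset ht)])
  have := hmono (left_mem_Icc.2 zero_le_one) (right_mem_Icc.2 zero_le_one) zero_le_one
  linarith

section GeneratingFunction

variable {d : ℕ} {S : Ed d × Ed d → ℝ}

lemma fderiv_snd_le_of_twist (hS : ContDiff ℝ 2 S) {A : ℝ}
    (htw : ∀ x y ξ : Ed d, iteratedFDeriv ℝ 2 S (x, y) ![(ξ, 0), (0, ξ)] ≤ -A * ‖ξ‖ ^ 2)
    (x y u : Ed d) {t : ℝ} (ht : 0 ≤ t) :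
    fderiv ℝ S (x + t • u, y) (0, u) ≤ fderiv ℝ S (x, y) (0, u) - A * ‖u‖ ^ 2 * t := by
  have hw : ∀ s, HasDerivAt (fun s => fderiv ℝ S (x + s • u, y) (0, u))
      (fderiv ℝ (fderiv ℝ S) (x + s • u, y) (u, 0) (0, u)) s :=
    fun s => by
      simpa using (hasDerivAt_comp_add_smul (x, y) (u, 0)
        ((hS.fderiv_right (by norm_num)).differentiable one_ne_zero _)).clm_apply
        (hasDerivAt_const s ((0 : Ed d), u))
  have hw' : ∀ s, deriv (fun s => fderiv ℝ S (x + s • u, y) (0, u)) s ≤ -A * ‖u‖ ^ 2 := fun s => by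
    rw [(hw s).deriv]
    simpa [iteratedFDeriv_two_apply] using htw _ _ u
  have := image_sub_le_mul_sub_of_deriv_le (fun s => (hw s).differentiableAt) hw' ht
  simp only [zero_smul, add_zero, sub_zero] at this
  linarith

lemma quadratic_lower_bound (hS : IsGenFn S) :
    ∃ A > 0, ∃ C₀ C₁ : ℝ, ∀ x y : Ed d, A / 2 * ‖y - x‖ ^ 2 - C₁ * ‖y - x‖ - C₀ ≤ S (x, y) := by
  obtain ⟨hC2, hper, A, hA, htw⟩ := hS
  have hdiff : Differentiable ℝ S := hC2.differentiable (by norm_num)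
  obtain ⟨C₀, hC₀⟩ := exists_norm_le_of_periodic (f := fun z => S (z, z))
    (hC2.continuous.comp (continuous_id.prodMk continuous_id)) fun r z => hper r z z
  obtain ⟨C₁, hC₁⟩ := exists_norm_le_of_periodic (f := fun z => fderiv ℝ S (z, z))
    ((hC2.continuous_fderiv (by norm_num)).comp (continuous_id.prodMk continuous_id))
    fun r z => fderiv_periodic hper r (z, z)
  refine ⟨A, hA, C₀, C₁, fun x y => ?_⟩
  -- along `t ↦ S(x, x + t u)` the twist keeps `∂₂S · u` at least `A t ‖u‖²` above its diagonal value
  set u := y - x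
  have hdiag : ∀ z : Ed d, -(C₁ * ‖u‖) ≤ fderiv ℝ S (z, z) (0, u) := fun z => by
    have h := (fderiv ℝ S (z, z)).le_opNorm (0, u)
    rw [Prod.norm_def, norm_zero, max_eq_right (norm_nonneg u)] at h
    exact neg_le_of_abs_le (h.trans (mul_le_mul_of_nonneg_right (hC₁ z) (norm_nonneg u)))
  have hgrowth := add_half_le_sub_of_le_deriv (a := -(C₁ * ‖u‖)) (b := A * ‖u‖ ^ 2)
    (fun t => by simpa using hasDerivAt_comp_add_smul (x, x) (0, u) (hdiff _))
    (fun t ht => by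
      have := fderiv_snd_le_of_twist hC2 htw x (x + t • u) u ht.1
      linarith [hdiag (x + t • u)])
  simp only [one_smul, zero_smul, add_zero] at hgrowth
  rw [show x + u = y by simp [u]] at hgrowth
  linarith [neg_le_of_abs_le (hC₀ x)]

lemma bddBelow_range_Sc (hS : IsGenFn S) (c : Ed d →L[ℝ] ℝ) :
    BddBelow (range (Sc S c)) := by
  obtain ⟨A, hA, C₀, C₁, hq⟩ := quadratic_lower_bound hS
  refine ⟨-C₀ - (C₁ + ‖c‖) ^ 2 / (2 * A), ?_⟩
  rintro _ ⟨⟨x, y⟩, rfl⟩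
  have hc : -(‖c‖ * ‖y - x‖) ≤ c (x - y) :=
    neg_le_of_abs_le (by simpa [norm_sub_rev] using c.le_opNorm (x - y))
  have hsq : 0 ≤ (A * ‖y - x‖ - (C₁ + ‖c‖)) ^ 2 / (2 * A) := by positivity
  have hexp : (A * ‖y - x‖ - (C₁ + ‖c‖)) ^ 2 / (2 * A)
      = A / 2 * ‖y - x‖ ^ 2 - (C₁ + ‖c‖) * ‖y - x‖ + (C₁ + ‖c‖) ^ 2 / (2 * A) := by
    field_simp; ring
  simp only [Sc]
  linarith [hq x y]

end GeneratingFunction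

section Holonomic

variable {d : ℕ} {T : Ed d × Ed d → ℝ}

lemma act_congr {n : ℕ} {γ γ' : ℕ → Ed d} (h : ∀ k ≤ n, γ k = γ' k) :
    act T n γ = act T n γ' :=
  Finset.sum_congr rfl fun k hk => by
    rw [h k (Finset.mem_range.1 hk).le, h (k + 1) (Finset.mem_range.1 hk)]

lemma act_Sc (S : Ed d × Ed d → ℝ) (c : Ed d →L[ℝ] ℝ) (n : ℕ) (γ : ℕ → Ed d) :
    act (Sc S c) n γ = act S n γ + c (γ 0 - γ n) := by
  simp only [act, Sc, Finset.sum_add_distrib, map_sub, Finset.sum_range_sub']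

lemma holVal_le (hT : BddBelow (range T)) {n : ℕ} (hn : 1 ≤ n) {γ : ℕ → Ed d}
    {r : Fin d → ℤ} (hγ : γ n - γ 0 = intVec d r) : holVal T ≤ act T n γ / n := by
  obtain ⟨C, hC⟩ := hT
  refine csInf_le ⟨C, ?_⟩ ⟨n, hn, γ, ⟨r, hγ⟩, rfl⟩
  rintro _ ⟨m, hm, γ', -, rfl⟩
  have hm' : (0 : ℝ) < m := by exact_mod_cast hm
  have := Finset.card_nsmul_le_sum (Finset.range m) _ C fun k _ => hC ⟨(γ' k, γ' (k + 1)), rfl⟩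
  rw [Finset.card_range, nsmul_eq_mul] at this
  rwa [le_div_iff₀ hm', mul_comm]

lemma le_holVal {b : ℝ}
    (h : ∀ n, 1 ≤ n → ∀ (γ : ℕ → Ed d) (r : Fin d → ℤ), γ n - γ 0 = intVec d r →
      b ≤ act T n γ / n) : b ≤ holVal T := by
  refine le_csInf ⟨_, 1, le_rfl, fun _ => 0, ⟨0, by simp [intVec_zero]⟩, rfl⟩ ?_
  rintro _ ⟨n, hn, γ, ⟨r, hr⟩, rfl⟩
  exact h n hn γ r hr

lemma holVal_sub_le_actTilde (hT : BddBelow (range T))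
    (hper : ∀ (r : Fin d → ℤ) (x y : Ed d), T (x + intVec d r, y + intVec d r) = T (x, y))
    {x y : Ed d} {n : ℕ} {γ : ℕ → Ed d} {r : Fin d → ℤ} (h0 : γ 0 = x)
    (hn : γ n - y = intVec d r) : holVal T - T (y, x) ≤ actTilde T n γ := by
  -- one more step, from `y + r` to `x + r`, closes `γ` into a loop of action `S(γ) + T(y, x)`
  set γ' := Function.update γ (n + 1) (x + intVec d r)
  have hγ' : ∀ k ≤ n, γ' k = γ k := fun k hk => Function.update_of_ne (by omega) _ _
  have hlast : γ' (n + 1) = x + intVec d r := Function.update_self _ _ _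
  have hloop : act T (n + 1) γ' = act T n γ + T (y, x) := by
    rw [act, Finset.sum_range_succ, ← act, act_congr hγ', hγ' n le_rfl, hlast,
      ← hper r y x, ← hn, add_sub_cancel]
  have hle := holVal_le hT (Nat.le_add_left 1 n) (γ := γ') (r := r)
    (by rw [hlast, hγ' 0 (Nat.zero_le n), h0]; abel)
  rw [le_div_iff₀ (by positivity), hloop] at hle
  simp only [actTilde]
  push_cast at hle
  linarith

lemma manePot_le_actTilde (hT : BddBelow (range T))
    (hper : ∀ (r : Fin d → ℤ) (x y : Ed d), T (x + intVec d r, y + intVec d r) = T (x, y))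
    {x y : Ed d} {n : ℕ} (hn : 1 ≤ n) {γ : ℕ → Ed d} {r : Fin d → ℤ} (h0 : γ 0 = x)
    (hy : γ n - y = intVec d r) : manePot T x y ≤ actTilde T n γ := by
  refine csInf_le ?_ ⟨n, hn, γ, h0, ⟨r, hy⟩, rfl⟩
  refine ⟨holVal T - T (y, x), ?_⟩
  rintro _ ⟨m, -, γ', h0', ⟨r', hy'⟩, rfl⟩
  exact holVal_sub_le_actTilde hT hper h0' hy'

lemma exists_actTilde_lt_manePot_add (x y : Ed d) {δ : ℝ} (hδ : 0 < δ) :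
    ∃ (n : ℕ) (γ : ℕ → Ed d) (r : Fin d → ℤ), 1 ≤ n ∧ γ 0 = x ∧ γ n - y = intVec d r ∧
      actTilde T n γ < manePot T x y + δ := by
  by_contra! h
  have : manePot T x y + δ ≤ manePot T x y :=
    le_csInf ⟨_, 1, le_rfl, fun k => if k = 0 then x else y, rfl, ⟨0, by simp [intVec_zero]⟩, rfl⟩
      (by rintro _ ⟨n, hn, γ, h0, ⟨r, hr⟩, rfl⟩; exact h n γ r hn h0 hr)
  linarith

end Holonomic

section CohomologyClass

variable {d : ℕ} {S : Ed d × Ed d → ℝ}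

lemma Sc_periodic
    (hper : ∀ (r : Fin d → ℤ) (x y : Ed d), S (x + intVec d r, y + intVec d r) = S (x, y))
    (c : Ed d →L[ℝ] ℝ) (r : Fin d → ℤ) (x y : Ed d) :
    Sc S c (x + intVec d r, y + intVec d r) = Sc S c (x, y) := by
  simp only [Sc, hper, add_sub_add_right_eq_sub]

lemma concaveOn_holVal_Sc (hS : ∀ c, BddBelow (range (Sc S c))) :
    ConcaveOn ℝ univ fun c => holVal (Sc S c) := by
  refine ⟨convex_univ, fun c₁ _ c₂ _ a b ha hb hab => le_holVal fun n hn γ r hγ => ?_⟩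
  have h₁ := holVal_le (hS c₁) hn hγ
  have h₂ := holVal_le (hS c₂) hn hγ
  have hsplit : act (Sc S (a • c₁ + b • c₂)) n γ / n
      = a * (act (Sc S c₁) n γ / n) + b * (act (Sc S c₂) n γ / n) := by
    obtain rfl : b = 1 - a := by linarith
    simp only [act_Sc, add_apply, smul_apply, smul_eq_mul]
    ring
  rw [hsplit, smul_eq_mul, smul_eq_mul]
  gcongr

lemma continuous_holVal_Sc (hS : ∀ c, BddBelow (range (Sc S c))) :
    Continuous fun c => holVal (Sc S c) :=
  continuousOn_univ.1 ((concaveOn_holVal_Sc hS).continuousOn isOpen_univ)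

lemma continuous_actTilde_Sc (hS : ∀ c, BddBelow (range (Sc S c))) (n : ℕ) (γ : ℕ → Ed d) :
    Continuous fun c => actTilde (Sc S c) n γ := by
  simp only [actTilde, act_Sc]
  have := continuous_holVal_Sc hS
  fun_prop

end CohomologyClass

theorem stmt_15_general (d : ℕ) (S : Ed d × Ed d → ℝ) (hS : IsGenFn S)
    (c : ℕ → (Ed d →L[ℝ] ℝ)) (c₀ : Ed d →L[ℝ] ℝ)
    (hc : Filter.Tendsto c Filter.atTop (nhds c₀)) :
    ∀ ε > (0 : ℝ), ∀ x y : Ed d, ∃ N₀ : ℕ, ∀ n : ℕ, N₀ ≤ n →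
      manePot (Sc S (c n)) x y ≤ ε + manePot (Sc S c₀) x y := by
  intro ε hε x y
  have hbdd := bddBelow_range_Sc hS
  obtain ⟨m, γ, r, hm, h0, hr, hγ⟩ :=
    exists_actTilde_lt_manePot_add (T := Sc S c₀) x y (half_pos hε)
  have hlim : Tendsto (fun n => actTilde (Sc S (c n)) m γ) atTop
      (𝓝 (actTilde (Sc S c₀) m γ)) :=
    ((continuous_actTilde_Sc hbdd m γ).tendsto c₀).comp hc
  obtain ⟨N₀, hN₀⟩ := eventually_atTop.1 (hlim.eventually (gt_mem_nhds
    (lt_add_of_pos_right (actTilde (Sc S c₀) m γ) (half_pos hε))))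
  refine ⟨N₀, fun n hn => ?_⟩
  have := manePot_le_actTilde (hbdd (c n)) (Sc_periodic hS.2.1 (c n)) hm h0 hr
  linarith [hN₀ n hn]

/-- If `(c_n)` converges to `c` in `(ℝ^d)*`, then for every `ε > 0` and every `(x,y)`,
one has `π_{c_n}(x,y) ≤ ε + π_c(x,y)` for all large enough `n`. -/
theorem stmt_15 (d : ℕ) (hd : 1 ≤ d) (S : Ed d × Ed d → ℝ) (hS : IsGenFn S)
    (c : ℕ → (Ed d →L[ℝ] ℝ)) (c₀ : Ed d →L[ℝ] ℝ)
    (hc : Filter.Tendsto c Filter.atTop (nhds c₀)) :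
    ∀ ε > (0 : ℝ), ∀ x y : Ed d, ∃ N₀ : ℕ, ∀ n : ℕ, N₀ ≤ n →
      manePot (Sc S (c n)) x y ≤ ε + manePot (Sc S c₀) x y :=
  stmt_15_general d S hS c c₀ hc

end
end

section
/- Let K be a compact subset of (ℝ^d)*. Then there exists a constant M ≥ 0 such that for every c ∈ K and every (x,y) ∈ Ā_c, one has ‖y − x‖ ≤ M. -/
noncomputable section

/-!
On the Aubry set of `S_c` one has `S_c(x, y) ≤ B`, where `B` bounds `S_c` on pairs at distance
at most `√d`: given `x₀, …, xₙ` of almost zero normalized action, dropping the first step and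
closing up with a jump of length `≤ √d` gives a loop, whose normalized action is nonnegative.
On the other hand the twist condition makes `S(x, y) - S(x, x)` grow quadratically in `‖y - x‖`,
periodicity makes all the constants uniform in `x`, and for `c` in a compact set the linear term
`c(x - y)` cannot compete with the quadratic growth.
-/

open Set

section Twist

variable {E : Type*} [NormedAddCommGroup E] [NormedSpace ℝ E] {S : E × E → ℝ} {A : ℝ}

theorem hasDerivAt_add_smul (x ξ : E) (t : ℝ) : HasDerivAt (fun t : ℝ => x + t • ξ) ξ t := by
  simpa using ((hasDerivAt_id t).smul_const ξ).const_add x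

theorem fderiv_apply_add_le_of_twist (hS : ContDiff ℝ 2 S)
    (htwist : ∀ x y ξ : E, iteratedFDeriv ℝ 2 S (x, y) ![(ξ, 0), (0, ξ)] ≤ -A * ‖ξ‖ ^ 2)
    (x ξ b : E) {s : ℝ} (hs : 0 ≤ s) :
    fderiv ℝ S (x + s • ξ, b) (0, ξ) + A * ‖ξ‖ ^ 2 * s ≤ fderiv ℝ S (x, b) (0, ξ) := by
  have hS' : ContDiff ℝ 1 (fderiv ℝ S) := hS.fderiv_right (by norm_num)
  have hderiv (s : ℝ) : HasDerivAt (fun s : ℝ => fderiv ℝ S (x + s • ξ, b) (0, ξ) + A * ‖ξ‖ ^ 2 * s)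
      (fderiv ℝ (fderiv ℝ S) (x + s • ξ, b) (ξ, 0) (0, ξ) + A * ‖ξ‖ ^ 2) s := by
    have hcomp : HasDerivAt (fun s : ℝ => fderiv ℝ S (x + s • ξ, b))
        (fderiv ℝ (fderiv ℝ S) (x + s • ξ, b) (ξ, 0)) s :=
      (hS'.differentiable one_ne_zero _).hasFDerivAt.comp_hasDerivAt s
        ((hasDerivAt_add_smul x ξ s).prodMk (hasDerivAt_const s b))
    have happ : HasDerivAt (fun s : ℝ => fderiv ℝ S (x + s • ξ, b) (0, ξ))
        (fderiv ℝ (fderiv ℝ S) (x + s • ξ, b) (ξ, 0) (0, ξ)) s := by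
      simpa using hcomp.clm_apply (hasDerivAt_const s ((0 : E), ξ))
    exact happ.add (by simpa using (hasDerivAt_id s).const_mul (A * ‖ξ‖ ^ 2))
  have hanti := antitone_of_hasDerivAt_nonpos hderiv fun s => by
    have h := htwist (x + s • ξ) b ξ
    rw [iteratedFDeriv_two_apply] at h
    simp only [Matrix.cons_val_zero, Matrix.cons_val_one] at h
    simp only [Pi.zero_apply]
    linarith
  simpa using hanti hs

theorem le_apply_of_twist (hS : ContDiff ℝ 2 S)
    (htwist : ∀ x y ξ : E, iteratedFDeriv ℝ 2 S (x, y) ![(ξ, 0), (0, ξ)] ≤ -A * ‖ξ‖ ^ 2)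
    {C : ℝ} (hdiag : ∀ z, ‖fderiv ℝ S (z, z)‖ ≤ C) (x y : E) :
    S (x, x) + A / 2 * ‖y - x‖ ^ 2 - C * ‖y - x‖ ≤ S (x, y) := by
  set ξ := y - x
  have hdiag' (z : E) : -(C * ‖ξ‖) ≤ fderiv ℝ S (z, z) (0, ξ) := by
    have h := ((fderiv ℝ S (z, z)).le_opNorm (0, ξ)).trans
      (mul_le_mul_of_nonneg_right (hdiag z) (norm_nonneg _))
    rw [Prod.norm_mk, norm_zero, max_eq_right (norm_nonneg _), Real.norm_eq_abs] at h
    exact neg_le_of_abs_le h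
  have hderiv (t : ℝ) :
      HasDerivAt (fun t => S (x, x + t • ξ) + C * ‖ξ‖ * t - A / 2 * ‖ξ‖ ^ 2 * t ^ 2)
        (fderiv ℝ S (x, x + t • ξ) (0, ξ) + C * ‖ξ‖ - A * ‖ξ‖ ^ 2 * t) t := by
    have hS1 := ((hS.differentiable two_ne_zero) _).hasFDerivAt.comp_hasDerivAt t
      ((hasDerivAt_const t x).prodMk (hasDerivAt_add_smul x ξ t))
    refine ((hS1.add ((hasDerivAt_id t).const_mul (C * ‖ξ‖))).sub
      ((hasDerivAt_pow 2 t).const_mul (A / 2 * ‖ξ‖ ^ 2))).congr_deriv ?_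
    simp only [mul_one]
    ring
  have hmono : MonotoneOn
      (fun t => S (x, x + t • ξ) + C * ‖ξ‖ * t - A / 2 * ‖ξ‖ ^ 2 * t ^ 2) (Ici 0) := by
    refine monotoneOn_of_hasDerivWithinAt_nonneg (convex_Ici 0)
      (fun t _ => (hderiv t).continuousAt.continuousWithinAt)
      (fun t _ => (hderiv t).hasDerivWithinAt) fun t ht => ?_
    rw [interior_Ici] at ht
    linarith [fderiv_apply_add_le_of_twist hS htwist x ξ (x + t • ξ) ht.le,
      hdiag' (x + t • ξ)]
  have h01 := hmono self_mem_Ici (mem_Ici.2 zero_le_one) zero_le_one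
  simp only [zero_smul, add_zero, one_smul, mul_zero, mul_one, one_pow, ne_eq,
    OfNat.ofNat_ne_zero, not_false_eq_true, zero_pow, sub_zero] at h01
  rw [show x + ξ = y from add_sub_cancel x y] at h01
  linarith

end Twist

theorem bddBelow_range_of_quadratic_le {α : Type*} {f g : α → ℝ} {A L C : ℝ} (hA : 0 < A)
    (h : ∀ a, A / 2 * g a ^ 2 - L * g a - C ≤ f a) : BddBelow (range f) := by
  refine ⟨-(L ^ 2 / (2 * A)) - C, forall_mem_range.2 fun a => ?_⟩
  have hsq : 0 ≤ (A * g a - L) ^ 2 / (2 * A) := by positivity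
  have hexp : (A * g a - L) ^ 2 / (2 * A) = A / 2 * g a ^ 2 - L * g a + L ^ 2 / (2 * A) := by
    field_simp
    ring
  linarith [h a]

theorem exists_le_of_quadratic_le {A : ℝ} (hA : 0 < A) (L K : ℝ) :
    ∃ M, 0 ≤ M ∧ ∀ t, 0 ≤ t → A / 2 * t ^ 2 - L * t ≤ K → t ≤ M := by
  refine ⟨2 * (|L| + |K|) / A + 1, by positivity, fun t ht hq => ?_⟩
  rcases le_or_gt t 1 with ht1 | ht1
  · linarith [show 0 ≤ 2 * (|L| + |K|) / A by positivity]
  · have hlin : A / 2 * t ≤ |L| + |K| := by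
      nlinarith [le_abs_self L, le_abs_self K, abs_nonneg K]
    have : t ≤ 2 * (|L| + |K|) / A := by
      rw [le_div_iff₀ hA]
      linarith
    linarith

section Periodic

variable {d : ℕ}

theorem exists_norm_sub_intVec_le (w : Ed d) : ∃ r, ‖w - intVec d r‖ ≤ √d := by
  refine ⟨fun i => round (w i), ?_⟩
  rw [EuclideanSpace.norm_eq]
  refine Real.sqrt_le_sqrt ?_
  calc ∑ i, ‖(w - intVec d fun i => round (w i)) i‖ ^ 2 ≤ ∑ _i : Fin d, (1 : ℝ) := by
        refine Finset.sum_le_sum fun i _ => ?_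
        have hround : |w i - round (w i)| ≤ 1 / 2 := abs_sub_round (w i)
        change ‖w i - (round (w i) : ℝ)‖ ^ 2 ≤ 1
        rw [Real.norm_eq_abs, sq_abs]
        nlinarith [abs_le.1 hround]
    _ = d := by simp

theorem exists_abs_le_of_periodic {f : Ed d × Ed d → ℝ} (hf : Continuous f)
    (hper : ∀ (r : Fin d → ℤ) (x y : Ed d), f (x + intVec d r, y + intVec d r) = f (x, y))
    (ρ : ℝ) : ∃ C, ∀ x y : Ed d, ‖y - x‖ ≤ ρ → |f (x, y)| ≤ C := by
  obtain ⟨C, hC⟩ := ((isCompact_closedBall (0 : Ed d) √d).prod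
    (isCompact_closedBall (0 : Ed d) (√d + ρ))).exists_bound_of_continuousOn hf.continuousOn
  refine ⟨C, fun x y hxy => ?_⟩
  obtain ⟨r, hr⟩ := exists_norm_sub_intVec_le x
  have hy : ‖y - intVec d r‖ ≤ √d + ρ := by
    calc ‖y - intVec d r‖ = ‖(y - x) + (x - intVec d r)‖ := by rw [sub_add_sub_cancel]
      _ ≤ √d + ρ := by linarith [norm_add_le (y - x) (x - intVec d r)]
  have htrans : f (x - intVec d r, y - intVec d r) = f (x, y) := by
    simpa using (hper r (x - intVec d r) (y - intVec d r)).symm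
  rw [← htrans, ← Real.norm_eq_abs]
  exact hC _ ⟨by simpa using hr, by simpa using hy⟩

theorem fderiv_add_intVec {S : Ed d × Ed d → ℝ}
    (hper : ∀ (r : Fin d → ℤ) (x y : Ed d), S (x + intVec d r, y + intVec d r) = S (x, y))
    (r : Fin d → ℤ) (x y : Ed d) :
    fderiv ℝ S (x + intVec d r, y + intVec d r) = fderiv ℝ S (x, y) := by
  have hS : (fun q : Ed d × Ed d => S (q + (intVec d r, intVec d r))) = S :=
    funext fun q => hper r q.1 q.2
  rw [← Prod.mk_add_mk, ← fderiv_comp_add_right, hS]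

theorem IsGenFn.exists_quadratic_le {S : Ed d × Ed d → ℝ} (hS : IsGenFn S) :
    ∃ A > 0, ∃ C C₀ : ℝ, ∀ x y, A / 2 * ‖y - x‖ ^ 2 - C * ‖y - x‖ - C₀ ≤ S (x, y) := by
  obtain ⟨hC2, hper, A, hA, htwist⟩ := hS
  obtain ⟨C, hC⟩ := exists_abs_le_of_periodic (hC2.continuous_fderiv two_ne_zero).norm
    (fun r x y => by rw [fderiv_add_intVec hper]) 0
  obtain ⟨C₀, hC₀⟩ := exists_abs_le_of_periodic hC2.continuous hper 0
  refine ⟨A, hA, C, C₀, fun x y => ?_⟩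
  have hquad := le_apply_of_twist hC2 htwist (fun z => by simpa using hC z z (by simp)) x y
  linarith [neg_le_of_abs_le (hC₀ x x (by simp))]

end Periodic

section Aubry

variable {d : ℕ} {T : Ed d × Ed d → ℝ}

theorem actTilde_nonneg (hT : BddBelow (range T)) {n : ℕ} (hn : 1 ≤ n) {γ : ℕ → Ed d}
    (hγ : ∃ r, γ n - γ 0 = intVec d r) : 0 ≤ actTilde T n γ := by
  obtain ⟨m, hm⟩ := hT
  have hact (n : ℕ) (γ : ℕ → Ed d) : n * m ≤ act T n γ := by
    simpa [act] using Finset.sum_le_sum fun k (_ : k ∈ Finset.range n) => hm ⟨(γ k, γ (k + 1)), rfl⟩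
  have hn' : (0 : ℝ) < n := by exact_mod_cast hn
  have hle : holVal T ≤ act T n γ / n := by
    refine csInf_le ⟨m, ?_⟩ ⟨n, hn, γ, hγ, rfl⟩
    rintro _ ⟨k, hk, δ, -, rfl⟩
    rw [le_div_iff₀ (by exact_mod_cast hk), mul_comm]
    exact hact k δ
  rw [actTilde, sub_nonneg, mul_comm, ← le_div_iff₀ hn']
  exact hle

theorem act_succ_add_of_shift (T : Ed d × Ed d → ℝ) (γ δ : ℕ → Ed d) (m : ℕ)
    (hδ : ∀ k ≤ m, δ k = γ (k + 1)) :
    act T (m + 1) δ + T (γ 0, γ 1) = act T (m + 1) γ + T (γ (m + 1), δ (m + 1)) := by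
  rw [act, act, Finset.sum_range_succ, Finset.sum_range_succ', hδ m le_rfl,
    Finset.sum_congr rfl fun k hk => by
      rw [hδ k (Finset.mem_range.1 hk).le, hδ (k + 1) (Finset.mem_range.1 hk)]]
  ring

theorem apply_le_actTilde_add (hT : BddBelow (range T)) {B : ℝ}
    (hB : ∀ u v : Ed d, ‖v - u‖ ≤ √d → T (u, v) ≤ B) {n : ℕ} (hn : 1 ≤ n) (γ : ℕ → Ed d) :
    T (γ 0, γ 1) ≤ actTilde T n γ + B := by
  obtain ⟨m, rfl⟩ : ∃ m, n = m + 1 := ⟨n - 1, by omega⟩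
  obtain ⟨s, hs⟩ := exists_norm_sub_intVec_le (γ (m + 1) - γ 1)
  set δ : ℕ → Ed d := fun k => if k ≤ m then γ (k + 1) else γ 1 + intVec d s
  have hδ (k : ℕ) (hk : k ≤ m) : δ k = γ (k + 1) := if_pos hk
  have hδend : δ (m + 1) = γ 1 + intVec d s := if_neg (by omega)
  have hloop : 0 ≤ actTilde T (m + 1) δ :=
    actTilde_nonneg hT hn ⟨s, by rw [hδend, hδ 0 m.zero_le, add_sub_cancel_left]⟩
  have hjump : T (γ (m + 1), δ (m + 1)) ≤ B := by
    refine hB _ _ ?_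
    rwa [hδend, ← norm_neg, neg_sub, sub_add_eq_sub_sub_swap, sub_right_comm]
  have hshift := act_succ_add_of_shift T γ δ m hδ
  rw [actTilde] at hloop ⊢
  linarith

theorem apply_le_of_mem_aubry (hTc : Continuous T) (hT : BddBelow (range T)) {B : ℝ}
    (hB : ∀ u v : Ed d, ‖v - u‖ ≤ √d → T (u, v) ≤ B) {p : Ed d × Ed d} (hp : p ∈ aubry T) :
    T p ≤ B := by
  refine le_of_forall_pos_le_add fun η hη => ?_
  refine (isClosed_le hTc continuous_const).closure_subset
    (Metric.mem_closure_iff.2 fun ε hε => ?_)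
  obtain ⟨n, hn, γ, -, h0, h1, hact⟩ := hp (min ε η) (lt_min hε hη)
  refine ⟨(γ 0, γ 1), ?_, ?_⟩
  · show T (γ 0, γ 1) ≤ B + η
    linarith [apply_le_actTilde_add hT hB hn γ, min_le_right ε η]
  · rw [Prod.dist_eq, max_lt_iff, dist_eq_norm, dist_eq_norm]
    exact ⟨h0.trans_le (min_le_left _ _), h1.trans_le (min_le_left _ _)⟩

end Aubry

theorem continuous_Sc {d : ℕ} {S : Ed d × Ed d → ℝ} (hS : Continuous S) (c : Ed d →L[ℝ] ℝ) :
    Continuous (Sc S c) :=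
  hS.add (c.continuous.comp (continuous_fst.sub continuous_snd))

theorem abs_Sc_sub_le {d : ℕ} (S : Ed d × Ed d → ℝ) {c : Ed d →L[ℝ] ℝ} {R : ℝ} (hc : ‖c‖ ≤ R)
    (x y : Ed d) : |Sc S c (x, y) - S (x, y)| ≤ R * ‖y - x‖ := by
  rw [Sc, add_sub_cancel_left, ← Real.norm_eq_abs, norm_sub_rev y]
  exact (c.le_opNorm _).trans (mul_le_mul_of_nonneg_right hc (norm_nonneg _))

theorem stmt_16_general (d : ℕ) (S : Ed d × Ed d → ℝ) (hS : IsGenFn S)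
    (K : Set (Ed d →L[ℝ] ℝ)) (hK : IsCompact K) :
    ∃ M : ℝ, 0 ≤ M ∧ ∀ c ∈ K, ∀ p ∈ aubry (Sc S c), ‖p.2 - p.1‖ ≤ M := by
  obtain ⟨A, hA, C, C₀, hquad⟩ := hS.exists_quadratic_le
  obtain ⟨C₁, hC₁⟩ := exists_abs_le_of_periodic hS.1.continuous hS.2.1 √d
  obtain ⟨R, hR⟩ : ∃ R, ∀ c ∈ K, ‖c‖ ≤ R := hK.exists_bound_of_continuousOn continuousOn_id
  obtain ⟨M, hM, hMq⟩ := exists_le_of_quadratic_le hA (C + R) (C₁ + R * √d + C₀)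
  refine ⟨M, hM, fun c hc p hp => hMq _ (norm_nonneg _) ?_⟩
  have hSc (x y : Ed d) := abs_le.1 (abs_Sc_sub_le S (hR c hc) x y)
  have hlow (x y : Ed d) : A / 2 * ‖y - x‖ ^ 2 - (C + R) * ‖y - x‖ - C₀ ≤ Sc S c (x, y) := by
    linarith [hquad x y, (hSc x y).1]
  have hup (x y : Ed d) (hxy : ‖y - x‖ ≤ √d) : Sc S c (x, y) ≤ C₁ + R * √d := by
    have := mul_le_mul_of_nonneg_left hxy ((norm_nonneg c).trans (hR c hc))
    linarith [(hSc x y).2, (abs_le.1 (hC₁ x y hxy)).2]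
  have hp' := apply_le_of_mem_aubry (continuous_Sc hS.1.continuous c)
    (bddBelow_range_of_quadratic_le (g := fun q => ‖q.2 - q.1‖) hA fun q => hlow q.1 q.2) hup hp
  linarith [hlow p.1 p.2]

/-- Let `K` be a compact subset of `(ℝ^d)*`. There exists a constant `M ≥ 0` such that
for every `c ∈ K` and every `(x,y) ∈ Ā_c`, one has `‖y - x‖ ≤ M`. -/
theorem stmt_16 (d : ℕ) (hd : 1 ≤ d) (S : Ed d × Ed d → ℝ) (hS : IsGenFn S)
    (K : Set (Ed d →L[ℝ] ℝ)) (hK : IsCompact K) :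
    ∃ M : ℝ, 0 ≤ M ∧ ∀ c ∈ K, ∀ p ∈ aubry (Sc S c), ‖p.2 - p.1‖ ≤ M :=
  stmt_16_general d S hS K hK
end
end

section
/- Assume S has no conjugate points. Let K be a compact subset of (ℝ^d)* and let x ∈ ℝ^d. Then the maps π_c(x, ·), for c ∈ K, are uniformly Lipschitz: there exists L ≥ 0 such that for every c ∈ K and all y, y' ∈ ℝ^d, |π_c(x,y) − π_c(x,y')| ≤ L ‖y − y'‖. -/
noncomputable section

namespace Stmt17A

variable {d : ℕ}

lemma norm_le_sqrt (v : Ed d) (h : ∀ i, |v i| ≤ 1) : ‖v‖ ≤ Real.sqrt d := by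
  rw [EuclideanSpace.norm_eq]
  apply Real.sqrt_le_sqrt
  calc ∑ i, ‖v i‖^2 ≤ ∑ _i : Fin d, (1:ℝ) := by
        apply Finset.sum_le_sum; intro i _
        have := h i
        rw [Real.norm_eq_abs]
        nlinarith [abs_nonneg (v i)]
    _ = d := by simp

lemma act_succ (T : Ed d × Ed d → ℝ) (m : ℕ) (γ : ℕ → Ed d) :
    act T (m+1) γ = act T m γ + T (γ m, γ (m+1)) := Finset.sum_range_succ _ m

lemma act_update (T : Ed d × Ed d → ℝ) (m : ℕ) (γ : ℕ → Ed d) (p : Ed d) :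
    act T (m+1) (Function.update γ (m+1) p) = act T m γ + T (γ m, p) := by
  rw [act_succ]
  congr 1
  · unfold act
    apply Finset.sum_congr rfl
    intro k hk; rw [Finset.mem_range] at hk
    rw [Function.update_of_ne (by omega), Function.update_of_ne (by omega)]
  · rw [Function.update_of_ne (by omega), Function.update_self]

lemma strip_bound (g : Ed d × Ed d → ℝ) (hg : Continuous g)
    (hper : ∀ (r : Fin d → ℤ) (x y : Ed d), g (x + intVec d r, y + intVec d r) = g (x, y))
    (R : ℝ) :
    ∃ C : ℝ, 0 ≤ C ∧ ∀ x y : Ed d, ‖y - x‖ ≤ R → g (x, y) ≤ C := by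
  set Q : Set (Ed d × Ed d) :=
    Metric.closedBall 0 (Real.sqrt d) ×ˢ Metric.closedBall 0 (Real.sqrt d + R) with hQdef
  have hQ : IsCompact Q := (isCompact_closedBall _ _).prod (isCompact_closedBall _ _)
  obtain ⟨C₀, hC₀⟩ := (hQ.image hg).bddAbove
  refine ⟨max C₀ 0, le_max_right _ _, ?_⟩
  intro x y hxy
  set r : Fin d → ℤ := fun i => -⌊x i⌋ with hrdef
  have key : g (x, y) = g (x + intVec d r, y + intVec d r) := (hper r x y).symm
  rw [key]
  have h1 : ∀ i, |(x + intVec d r) i| ≤ 1 := by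
    intro i
    rw [PiLp.add_apply]
    show |x i + ((-⌊x i⌋ : ℤ) : ℝ)| ≤ 1
    push_cast
    rw [abs_le]
    constructor
    · linarith [Int.floor_le (x i)]
    · linarith [Int.lt_floor_add_one (x i)]
  have hx' : ‖x + intVec d r‖ ≤ Real.sqrt d := norm_le_sqrt _ h1
  have hy' : ‖y + intVec d r‖ ≤ Real.sqrt d + R := by
    have h2 : (y + intVec d r) = (x + intVec d r) + (y - x) := by abel
    calc ‖y + intVec d r‖ = ‖(x + intVec d r) + (y - x)‖ := by rw [← h2]
      _ ≤ ‖x + intVec d r‖ + ‖y - x‖ := norm_add_le _ _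
      _ ≤ Real.sqrt d + R := add_le_add hx' hxy
  have hmem : (x + intVec d r, y + intVec d r) ∈ Q := by
    rw [hQdef]
    exact ⟨mem_closedBall_zero_iff.2 hx', mem_closedBall_zero_iff.2 hy'⟩
  exact le_max_of_le_left (hC₀ (Set.mem_image_of_mem _ hmem))

lemma fderiv_periodic (S : Ed d × Ed d → ℝ) (hdiff : Differentiable ℝ S)
    (hper : ∀ (r : Fin d → ℤ) (x y : Ed d), S (x + intVec d r, y + intVec d r) = S (x, y))
    (r : Fin d → ℤ) (x y : Ed d) :
    fderiv ℝ S (x + intVec d r, y + intVec d r) = fderiv ℝ S (x, y) := by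
  set v : Ed d × Ed d := (intVec d r, intVec d r) with hvdef
  have hfun : (fun q : Ed d × Ed d => S (q + v)) = S := by
    funext q
    exact hper r q.1 q.2
  have h1 : HasFDerivAt (fun q : Ed d × Ed d => S (q + v))
      (fderiv ℝ S ((x,y) + v)) (x, y) := by
    have h2 : HasFDerivAt (fun q : Ed d × Ed d => q + v)
        (ContinuousLinearMap.id ℝ _) (x, y) := (hasFDerivAt_id _).add_const v
    have h3 := (hdiff ((x,y)+v)).hasFDerivAt.comp (x,y) h2
    rw [ContinuousLinearMap.comp_id] at h3
    exact h3
  have h4 := h1.fderiv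
  rw [hfun] at h4
  rw [h4, hvdef, Prod.mk_add_mk]

lemma coercive (S : Ed d × Ed d → ℝ) (hC2 : ContDiff ℝ 2 S)
    (A : ℝ) (hA : 0 < A)
    (htw : ∀ (x y ξ : Ed d), iteratedFDeriv ℝ 2 S (x, y) ![(ξ, 0), (0, ξ)] ≤ -A * ‖ξ‖ ^ 2)
    (M : ℝ) (hM : ∀ z : Ed d, ‖fderiv ℝ S (z, z)‖ ≤ M)
    (x y : Ed d) :
    S (x, x) - M * ‖y - x‖ + A / 2 * ‖y - x‖ ^ 2 ≤ S (x, y) := by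
  have hF1 : ContDiff ℝ 1 (fderiv ℝ S) := hC2.fderiv_right (by norm_num)
  have hFdiff : Differentiable ℝ (fderiv ℝ S) := hF1.differentiable one_ne_zero
  have hSdiff : Differentiable ℝ S := hC2.differentiable two_ne_zero
  set ξ : Ed d := y - x with hξdef
  have inner : ∀ t : ℝ, 0 ≤ t →
      A * t * ‖ξ‖^2 + fderiv ℝ S (x + t • ξ, x + t • ξ) (0, ξ)
        ≤ fderiv ℝ S (x, x + t • ξ) (0, ξ) := by
    intro t ht
    set z : Ed d := x + t • ξ with hzdef
    set w : Ed d × Ed d := (-(t • ξ), 0) with hwdef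
    set g : ℝ → ℝ := fun s =>
      fderiv ℝ S ((z, z) + s • w) (0, ξ) - A * t * ‖ξ‖^2 * s with hgdef
    have hq : ∀ s : ℝ, HasDerivAt (fun s : ℝ => (z, z) + s • w) w s := by
      intro s
      simpa using ((hasDerivAt_id s).smul_const w).const_add ((z, z) : Ed d × Ed d)
    have hg' : ∀ s : ℝ, HasDerivAt g
        ((fderiv ℝ (fderiv ℝ S) ((z, z) + s • w) w) (0, ξ) - A * t * ‖ξ‖^2) s := by
      intro s
      have hc : HasDerivAt (fun s : ℝ => fderiv ℝ S ((z, z) + s • w))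
          (fderiv ℝ (fderiv ℝ S) ((z, z) + s • w) w) s :=
        (hFdiff ((z, z) + s • w)).hasFDerivAt.comp_hasDerivAt s (hq s)
      have h2 := hc.clm_apply (hasDerivAt_const s ((0 : Ed d), ξ))
      simp only [map_zero, add_zero] at h2
      exact h2.sub (((hasDerivAt_id s).const_mul (A * t * ‖ξ‖^2)).congr_deriv (by ring))
    have hgmono : Monotone g := by
      apply monotone_of_deriv_nonneg
      · intro s; exact (hg' s).differentiableAt
      · intro s
        rw [(hg' s).deriv]
        have hbl : (fderiv ℝ (fderiv ℝ S) ((z, z) + s • w) w) (0, ξ)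
            = -t * ((fderiv ℝ (fderiv ℝ S) ((z, z) + s • w) (ξ, 0)) (0, ξ)) := by
          have hw2 : w = (-t) • ((ξ, 0) : Ed d × Ed d) := by
            rw [hwdef, Prod.smul_mk, neg_smul, smul_zero]
          rw [hw2, map_smul]
          simp
        have htwist : (fderiv ℝ (fderiv ℝ S) ((z, z) + s • w) (ξ, 0)) (0, ξ) ≤ -A * ‖ξ‖^2 := by
          have h3 := htw ((z, z) + s • w).1 ((z, z) + s • w).2 ξ
          rw [Prod.mk.eta, iteratedFDeriv_two_apply] at h3
          simp only [Matrix.cons_val_zero, Matrix.cons_val_one, Matrix.head_cons] at h3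
          exact h3
        nlinarith [htwist]
    have h01 := hgmono (by norm_num : (0:ℝ) ≤ 1)
    have hg0 : g 0 = fderiv ℝ S (z, z) (0, ξ) := by
      simp [hgdef]
    have hg1 : g 1 = fderiv ℝ S (x, z) (0, ξ) - A * t * ‖ξ‖^2 := by
      have hzw : ((z, z) : Ed d × Ed d) + (1:ℝ) • w = (x, z) := by
        rw [hwdef, one_smul, Prod.mk_add_mk]
        simp only [Prod.mk.injEq]
        refine ⟨?_, by rw [add_zero]⟩
        rw [hzdef]; abel
      rw [hgdef]
      simp only [hzw]
      ring_nf
    rw [hg0, hg1] at h01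
    linarith
  set G : ℝ → ℝ := fun t =>
    S ((x, x) + t • ((0, ξ) : Ed d × Ed d)) - (A/2 * ‖ξ‖^2 * t^2 - M * ‖ξ‖ * t) with hGdef
  have hq2 : ∀ t : ℝ, HasDerivAt (fun t : ℝ => (x, x) + t • ((0, ξ) : Ed d × Ed d))
      ((0, ξ) : Ed d × Ed d) t := by
    intro t
    simpa using ((hasDerivAt_id t).smul_const ((0, ξ) : Ed d × Ed d)).const_add
      ((x, x) : Ed d × Ed d)
  have hG' : ∀ t : ℝ, HasDerivAt G
      (fderiv ℝ S ((x, x) + t • ((0, ξ) : Ed d × Ed d)) (0, ξ)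
        - (A/2 * ‖ξ‖^2 * (2*t) - M * ‖ξ‖)) t := by
    intro t
    have h1 : HasDerivAt (fun t : ℝ => S ((x, x) + t • ((0, ξ) : Ed d × Ed d)))
        (fderiv ℝ S ((x, x) + t • ((0, ξ) : Ed d × Ed d)) (0, ξ)) t :=
      (hSdiff _).hasFDerivAt.comp_hasDerivAt t (hq2 t)
    have h2 : HasDerivAt (fun t : ℝ => A/2 * ‖ξ‖^2 * t^2 - M * ‖ξ‖ * t)
        (A/2 * ‖ξ‖^2 * (2*t) - M * ‖ξ‖) t := by
      have h3 := ((hasDerivAt_pow 2 t).const_mul (A/2 * ‖ξ‖^2)).sub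
        ((hasDerivAt_id t).const_mul (M * ‖ξ‖))
      exact h3.congr_deriv (by push_cast; ring)
    exact h1.sub h2
  have hkey : ∀ t : ℝ, 0 ≤ t → ((x, x) : Ed d × Ed d) + t • ((0, ξ) : Ed d × Ed d)
      = (x, x + t • ξ) := by
    intro t _
    rw [Prod.smul_mk, Prod.mk_add_mk, smul_zero, add_zero]
  have hGmono : MonotoneOn G (Set.Ici (0:ℝ)) := by
    apply monotoneOn_of_deriv_nonneg (convex_Ici 0)
    · exact (Differentiable.continuous (fun t => (hG' t).differentiableAt)).continuousOn
    · intro t _; exact ((hG' t).differentiableAt).differentiableWithinAt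
    · intro t ht
      rw [interior_Ici] at ht
      have ht0 : (0:ℝ) ≤ t := le_of_lt ht
      rw [(hG' t).deriv, hkey t ht0]
      have h4 := inner t ht0
      have h5 : |fderiv ℝ S (x + t • ξ, x + t • ξ) (0, ξ)| ≤ M * ‖ξ‖ := by
        calc |fderiv ℝ S (x + t • ξ, x + t • ξ) (0, ξ)|
            ≤ ‖fderiv ℝ S (x + t • ξ, x + t • ξ)‖ * ‖((0 : Ed d), ξ)‖ := by
              exact (fderiv ℝ S (x + t • ξ, x + t • ξ)).le_opNorm _
          _ ≤ M * ‖ξ‖ := by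
              have h6 : ‖((0 : Ed d), ξ)‖ = ‖ξ‖ := by simp [Prod.norm_def]
              rw [h6]
              exact mul_le_mul_of_nonneg_right (hM _) (norm_nonneg _)
      have h7 := abs_le.1 h5
      nlinarith [h7.1]
  have h01 := hGmono (Set.mem_Ici.2 (le_refl (0:ℝ))) (Set.mem_Ici.2 (by norm_num : (0:ℝ) ≤ 1))
    (by norm_num : (0:ℝ) ≤ 1)
  have hG0 : G 0 = S (x, x) := by simp [hGdef]
  have hG1 : G 1 = S (x, y) - (A/2 * ‖ξ‖^2 - M * ‖ξ‖) := by
    have h8 : ((x, x) : Ed d × Ed d) + (1:ℝ) • ((0, ξ) : Ed d × Ed d) = (x, y) := by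
      rw [one_smul, Prod.mk_add_mk]
      simp only [Prod.mk.injEq]
      refine ⟨by rw [add_zero], ?_⟩
      rw [hξdef]; abel
    rw [hGdef]
    simp only [h8]
    ring_nf
  rw [hG0, hG1] at h01
  have : ‖ξ‖ = ‖y - x‖ := by rw [hξdef]
  linarith [h01]

lemma quad_lower (A D C t : ℝ) (hA : 0 < A) :
    -(D^2/(2*A) + C) ≤ A/2 * t^2 - D*t - C := by
  have h3 : A/2*t^2 - D*t + D^2/(2*A) = (A*t - D)^2 / (2*A) := by
    field_simp; ring
  have h4 : (0:ℝ) ≤ (A*t - D)^2 / (2*A) := by positivity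
  linarith [h3 ▸ h4]

lemma quad_upper (A D F t : ℝ) (hA : 0 < A) (hD : 0 ≤ D) (hF : 0 ≤ F) (ht : 0 ≤ t)
    (h : A/2 * t^2 ≤ F + D * t) : t ≤ Real.sqrt (4*F/A + 4*D^2/A^2) := by
  rw [Real.le_sqrt ht (by positivity)]
  have key : A^2 * t^2 ≤ 4*F*A + 4*D^2 := by nlinarith [sq_nonneg (A*t - 2*D)]
  have h5 : 4*F/A + 4*D^2/A^2 = (4*F*A + 4*D^2)/A^2 := by field_simp
  rw [h5, le_div_iff₀ (by positivity)]
  linarith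

lemma move_bound (S : Ed d × Ed d → ℝ) (hSdiff : Differentiable ℝ S)
    (c : Ed d →L[ℝ] ℝ) (M₂ κ R : ℝ) (hc : ‖c‖ ≤ κ)
    (hM₂ : ∀ u v : Ed d, ‖v - u‖ ≤ R + 1 → ‖fderiv ℝ S (u, v)‖ ≤ M₂)
    (a b b' : Ed d) (hb : ‖b - a‖ ≤ R) (hb' : ‖b' - b‖ ≤ 1) :
    |Sc S c (a, b') - Sc S c (a, b)| ≤ (M₂ + κ) * ‖b' - b‖ := by
  set f : Ed d → ℝ := fun z => S (a, z) + c (a - z) with hfdef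
  set Φ : Ed d → (Ed d →L[ℝ] ℝ) := fun z =>
    (fderiv ℝ S (a, z)).comp (ContinuousLinearMap.inr ℝ (Ed d) (Ed d))
      + c.comp (-(ContinuousLinearMap.id ℝ (Ed d))) with hΦdef
  have hf : ∀ z : Ed d, HasFDerivAt f (Φ z) z := by
    intro z
    have h1 : HasFDerivAt (fun z : Ed d => S (a, z))
        ((fderiv ℝ S (a, z)).comp (ContinuousLinearMap.inr ℝ (Ed d) (Ed d))) z :=
      (hSdiff (a, z)).hasFDerivAt.comp z (hasFDerivAt_prodMk_right a z)
    have h2 : HasFDerivAt (fun z : Ed d => c (a - z))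
        (c.comp (-(ContinuousLinearMap.id ℝ (Ed d)))) z := by
      have h3 : HasFDerivAt (fun z : Ed d => a - z) (-(ContinuousLinearMap.id ℝ (Ed d))) z :=
        (hasFDerivAt_id z).const_sub a
      exact c.hasFDerivAt.comp z h3
    exact h1.add h2
  have hnorm : ∀ z : Ed d, ‖z - a‖ ≤ R + 1 → ‖Φ z‖ ≤ M₂ + κ := by
    intro z hz
    have hinr : ‖(ContinuousLinearMap.inr ℝ (Ed d) (Ed d))‖ ≤ 1 := by
      apply ContinuousLinearMap.opNorm_le_bound _ zero_le_one
      intro ξ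
      rw [one_mul]
      show ‖((0 : Ed d), ξ)‖ ≤ ‖ξ‖
      rw [Prod.norm_def]
      simp
    calc ‖Φ z‖ ≤ ‖(fderiv ℝ S (a, z)).comp (ContinuousLinearMap.inr ℝ (Ed d) (Ed d))‖
          + ‖c.comp (-(ContinuousLinearMap.id ℝ (Ed d)))‖ := norm_add_le _ _
      _ ≤ ‖fderiv ℝ S (a, z)‖ * 1 + ‖c‖ * 1 := by
          apply add_le_add
          · exact le_trans (ContinuousLinearMap.opNorm_comp_le _ _)
              (mul_le_mul_of_nonneg_left hinr (norm_nonneg _))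
          · refine le_trans (ContinuousLinearMap.opNorm_comp_le _ _) ?_
            apply mul_le_mul_of_nonneg_left _ (norm_nonneg _)
            rw [norm_neg]
            exact ContinuousLinearMap.norm_id_le
      _ ≤ M₂ + κ := by
          rw [mul_one, mul_one]
          exact add_le_add (hM₂ a z hz) hc
  have hball : ∀ z ∈ Metric.closedBall a (R + 1), ‖fderiv ℝ f z‖ ≤ M₂ + κ := by
    intro z hz
    rw [(hf z).fderiv]
    refine hnorm z ?_
    rw [Metric.mem_closedBall, dist_eq_norm] at hz
    exact hz
  have hbmem : b ∈ Metric.closedBall a (R + 1) := by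
    rw [Metric.mem_closedBall, dist_eq_norm]
    linarith
  have hbmem' : b' ∈ Metric.closedBall a (R + 1) := by
    rw [Metric.mem_closedBall, dist_eq_norm]
    calc ‖b' - a‖ = ‖(b' - b) + (b - a)‖ := by abel_nf
      _ ≤ ‖b' - b‖ + ‖b - a‖ := norm_add_le _ _
      _ ≤ R + 1 := by linarith
  have hmv := Convex.norm_image_sub_le_of_norm_fderiv_le
    (fun z _ => (hf z).differentiableAt) hball (convex_closedBall a (R+1)) hbmem hbmem'
  rw [Real.norm_eq_abs] at hmv
  have heq : f b' - f b = Sc S c (a, b') - Sc S c (a, b) := rfl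
  rw [heq] at hmv
  exact hmv

end Stmt17A

set_option maxHeartbeats 1600000 in
/-- If `S` has no conjugate points, `K ⊂ (ℝ^d)*` is compact and `x ∈ ℝ^d`, then the maps
`π_c(x, ·)`, `c ∈ K`, are uniformly Lipschitz. -/
theorem stmt_17 (d : ℕ) (hd : 1 ≤ d) (S : Ed d × Ed d → ℝ) (hS : IsGenFn S)
    (h : NoConjPts S) (K : Set (Ed d →L[ℝ] ℝ)) (hK : IsCompact K) (x : Ed d) :
    ∃ L : ℝ, 0 ≤ L ∧ ∀ c ∈ K, ∀ y y' : Ed d,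
      |manePot (Sc S c) x y - manePot (Sc S c) x y'| ≤ L * ‖y - y'‖ := by
  clear h hd
  obtain ⟨hC2, hper, A, hA, htw⟩ := hS
  have hSdiff : Differentiable ℝ S := hC2.differentiable two_ne_zero
  have hScont : Continuous S := hC2.continuous
  have hF1 : ContDiff ℝ 1 (fderiv ℝ S) := hC2.fderiv_right (by norm_num)
  have hFcont : Continuous (fderiv ℝ S) := hF1.continuous
  have hsd0 : (0:ℝ) ≤ Real.sqrt d := Real.sqrt_nonneg _
  -- bound on K
  obtain ⟨κ₀, hκ₀⟩ := isBounded_iff_forall_norm_le.1 hK.isBounded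
  set κ := max κ₀ 0 with hκdef
  have hκ0 : 0 ≤ κ := le_max_right _ _
  have hκ : ∀ c ∈ K, ‖c‖ ≤ κ := fun c hc => le_max_of_le_left (hκ₀ c hc)
  -- bound for |S| near diagonal
  obtain ⟨C, hC0, hC⟩ := Stmt17A.strip_bound (fun p => |S p|) hScont.abs
    (fun r a b => by rw [hper]) (Real.sqrt d)
  -- bound for ‖fderiv S‖ near diagonal
  obtain ⟨M, hM0, hM⟩ := Stmt17A.strip_bound (fun p => ‖fderiv ℝ S p‖) hFcont.norm
    (fun r a b => by rw [Stmt17A.fderiv_periodic S hSdiff hper]) (Real.sqrt d)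
  have hMdiag : ∀ z : Ed d, ‖fderiv ℝ S (z, z)‖ ≤ M := fun z => hM z z (by simp [hsd0])
  have hcoer := Stmt17A.coercive S hC2 A hA htw M hMdiag
  have hSlow : ∀ u v : Ed d, A/2 * ‖v - u‖^2 - M * ‖v - u‖ - C ≤ S (u, v) := by
    intro u v
    have h1 := hcoer u v
    have h2 : |S (u, u)| ≤ C := hC u u (by simp [hsd0])
    have h3 := (abs_le.1 h2).1
    linarith
  -- constants
  set D := M + κ with hDdef
  have hD0 : 0 ≤ D := add_nonneg hM0 hκ0
  set Cq := D^2/(2*A) + C with hCqdef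
  have hCq0 : 0 ≤ Cq := by positivity
  set B₁ := Cq + C + κ * Real.sqrt d with hB₁def
  have hB₁0 : 0 ≤ B₁ := by positivity
  set F := 2*B₁ + 1 + 2*C with hFdef
  have hF0 : 0 ≤ F := by positivity
  set R := Real.sqrt (4*F/A + 4*D^2/A^2) with hRdef
  have hR0 : 0 ≤ R := Real.sqrt_nonneg _
  obtain ⟨M₂, hM₂0, hM₂⟩ := Stmt17A.strip_bound (fun p => ‖fderiv ℝ S p‖) hFcont.norm
    (fun r a b => by rw [Stmt17A.fderiv_periodic S hSdiff hper]) (R + 1)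
  -- per-step lower bound for Sc
  have hTlow : ∀ c : Ed d →L[ℝ] ℝ, ‖c‖ ≤ κ → ∀ u v : Ed d,
      A/2 * ‖v - u‖^2 - D * ‖v - u‖ - C ≤ Sc S c (u, v) := by
    intro c hc u v
    have h1 := hSlow u v
    have h2 := c.le_opNorm (u - v)
    rw [Real.norm_eq_abs] at h2
    have h3 : |c (u - v)| ≤ κ * ‖v - u‖ := by
      calc |c (u - v)| ≤ ‖c‖ * ‖u - v‖ := h2
        _ ≤ κ * ‖v - u‖ := by
            rw [norm_sub_rev u v]
            exact mul_le_mul_of_nonneg_right hc (norm_nonneg _)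
    have h4 := (abs_le.1 h3).1
    show A/2 * ‖v - u‖^2 - D * ‖v - u‖ - C ≤ S (u, v) + c (u - v)
    rw [hDdef]
    linarith
  have hstep : ∀ c : Ed d →L[ℝ] ℝ, ‖c‖ ≤ κ → ∀ u v : Ed d, -Cq ≤ Sc S c (u, v) := by
    intro c hc u v
    have h1 := hTlow c hc u v
    have h2 := Stmt17A.quad_lower A D C ‖v - u‖ hA
    rw [hCqdef]
    linarith
  -- Sc is bounded above near the (ℤ^d-translated) diagonal
  have hTnear : ∀ c : Ed d →L[ℝ] ℝ, ‖c‖ ≤ κ → ∀ u v : Ed d, ‖v - u‖ ≤ Real.sqrt d →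
      Sc S c (u, v) ≤ C + κ * Real.sqrt d := by
    intro c hc u v huv
    have h1 := (abs_le.1 (hC u v huv)).2
    have h2 := c.le_opNorm (u - v)
    rw [Real.norm_eq_abs] at h2
    have h3 : |c (u - v)| ≤ κ * Real.sqrt d := by
      calc |c (u - v)| ≤ ‖c‖ * ‖u - v‖ := h2
        _ ≤ κ * Real.sqrt d := by
            rw [norm_sub_rev u v]
            exact mul_le_mul hc huv (norm_nonneg _) hκ0
    have h4 := (abs_le.1 h3).2
    show S (u, v) + c (u - v) ≤ C + κ * Real.sqrt d
    linarith
  -- the holVal set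
  set VV : (Ed d →L[ℝ] ℝ) → Set ℝ := fun c =>
    { v : ℝ | ∃ n : ℕ, 1 ≤ n ∧ ∃ γ : ℕ → Ed d,
      (∃ r : Fin d → ℤ, γ n - γ 0 = intVec d r) ∧ v = act (Sc S c) n γ / n } with hVVdef
  have hVV : ∀ c, holVal (Sc S c) = sInf (VV c) := fun c => rfl
  have hVlb : ∀ c : Ed d →L[ℝ] ℝ, ‖c‖ ≤ κ → ∀ v' ∈ VV c, -Cq ≤ v' := by
    intro c hc v' hv'
    obtain ⟨n, hn, γ, -, rfl⟩ := hv'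
    have h1 : ∀ k ∈ Finset.range n, -Cq ≤ Sc S c (γ k, γ (k+1)) := fun k _ => hstep c hc _ _
    have h2 := Finset.sum_le_sum h1
    rw [Finset.sum_const, Finset.card_range] at h2
    have hsum : -(Cq * n) ≤ act (Sc S c) n γ := by
      calc -(Cq * n) = n • (-Cq) := by rw [nsmul_eq_mul]; ring
        _ ≤ _ := h2
    have hn0 : (0:ℝ) < n := by exact_mod_cast hn
    rw [le_div_iff₀ hn0]
    linarith
  have hVbdd : ∀ c : Ed d →L[ℝ] ℝ, ‖c‖ ≤ κ → BddBelow (VV c) :=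
    fun c hc => ⟨-Cq, fun v hv => hVlb c hc v hv⟩
  have hVmem0 : ∀ c : Ed d →L[ℝ] ℝ, act (Sc S c) 1 (fun _ => (0:Ed d)) / ((1:ℕ):ℝ) ∈ VV c := by
    intro c
    refine ⟨1, le_refl 1, fun _ => (0:Ed d), ⟨fun _ => 0, ?_⟩, rfl⟩
    ext i
    simp [intVec]
  have hhol_lb : ∀ c : Ed d →L[ℝ] ℝ, ‖c‖ ≤ κ → -Cq ≤ holVal (Sc S c) := by
    intro c hc
    rw [hVV c]
    exact le_csInf ⟨_, hVmem0 c⟩ (hVlb c hc)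
  have hhol_ub : ∀ c : Ed d →L[ℝ] ℝ, ‖c‖ ≤ κ → holVal (Sc S c) ≤ C := by
    intro c hc
    have h1 : holVal (Sc S c) ≤ act (Sc S c) 1 (fun _ => (0:Ed d)) / ((1:ℕ):ℝ) := by
      rw [hVV c]
      exact csInf_le (hVbdd c hc) (hVmem0 c)
    have h2 : act (Sc S c) 1 (fun _ => (0:Ed d)) = Sc S c (0, 0) := by
      unfold act
      rw [Finset.sum_range_one]
    have h3 : Sc S c ((0:Ed d), (0:Ed d)) = S (0, 0) := by
      show S (0, 0) + c (0 - 0) = S (0, 0)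
      simp
    have h4 : S ((0:Ed d), (0:Ed d)) ≤ C := le_trans (le_abs_self _) (hC 0 0 (by simp [hsd0]))
    rw [h2, h3, Nat.cast_one, div_one] at h1
    exact le_trans h1 h4
  -- universal chain lower bound
  have hchain : ∀ c : Ed d →L[ℝ] ℝ, ‖c‖ ≤ κ → ∀ n : ℕ, 1 ≤ n → ∀ γ : ℕ → Ed d,
      -B₁ ≤ actTilde (Sc S c) n γ := by
    intro c hc n hn γ
    set p : Ed d := γ 0 + intVec d (fun i => ⌈γ n i - γ 0 i⌉) with hpdef
    have hpnorm : ‖p - γ n‖ ≤ Real.sqrt d := by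
      apply Stmt17A.norm_le_sqrt
      intro i
      have h1 : (p - γ n) i = ((⌈γ n i - γ 0 i⌉ : ℤ) : ℝ) - (γ n i - γ 0 i) := by
        rw [PiLp.sub_apply, hpdef, PiLp.add_apply]
        show γ 0 i + ((⌈γ n i - γ 0 i⌉ : ℤ) : ℝ) - γ n i = _
        ring
      rw [h1, abs_le]
      constructor
      · linarith [Int.le_ceil (γ n i - γ 0 i)]
      · linarith [Int.ceil_lt_add_one (γ n i - γ 0 i)]
    have hTp : Sc S c (γ n, p) ≤ C + κ * Real.sqrt d := by
      refine hTnear c hc (γ n) p hpnorm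
    have hmem : act (Sc S c) (n+1) (Function.update γ (n+1) p) / (((n+1):ℕ):ℝ) ∈ VV c := by
      refine ⟨n+1, by omega, Function.update γ (n+1) p, ⟨fun i => ⌈γ n i - γ 0 i⌉, ?_⟩, rfl⟩
      rw [Function.update_self, Function.update_of_ne (by omega)]
      rw [hpdef]
      exact add_sub_cancel_left _ _
    have h5 : holVal (Sc S c) ≤ act (Sc S c) (n+1) (Function.update γ (n+1) p) / (((n+1):ℕ):ℝ) := by
      rw [hVV c]
      exact csInf_le (hVbdd c hc) hmem
    rw [le_div_iff₀ (by positivity : (0:ℝ) < (((n+1):ℕ):ℝ))] at h5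
    rw [Stmt17A.act_update] at h5
    have h6 := hhol_lb c hc
    show -B₁ ≤ act (Sc S c) n γ - (n:ℝ) * holVal (Sc S c)
    push_cast at h5
    rw [hB₁def]
    nlinarith [h5, h6, hTp]
  -- the Mañé potential sets
  set PP : (Ed d →L[ℝ] ℝ) → Ed d → Set ℝ := fun c y =>
    { v : ℝ | ∃ n : ℕ, 1 ≤ n ∧ ∃ γ : ℕ → Ed d,
      γ 0 = x ∧ (∃ r : Fin d → ℤ, γ n - y = intVec d r) ∧ v = actTilde (Sc S c) n γ } with hPPdef
  have hPP : ∀ c y, manePot (Sc S c) x y = sInf (PP c y) := fun c y => rfl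
  have hPlbset : ∀ c : Ed d →L[ℝ] ℝ, ‖c‖ ≤ κ → ∀ y : Ed d, ∀ v ∈ PP c y, -B₁ ≤ v := by
    intro c hc y v hv
    obtain ⟨n, hn, γ, -, -, rfl⟩ := hv
    exact hchain c hc n hn γ
  have hPbdd : ∀ c : Ed d →L[ℝ] ℝ, ‖c‖ ≤ κ → ∀ y : Ed d, BddBelow (PP c y) :=
    fun c hc y => ⟨-B₁, fun v hv => hPlbset c hc y v hv⟩
  have hPmem : ∀ c : Ed d →L[ℝ] ℝ, ∀ y : Ed d,
      ∃ v ∈ PP c y, (‖c‖ ≤ κ → v ≤ B₁) := by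
    intro c y
    set r : Fin d → ℤ := fun i => ⌊x i - y i⌋ with hrdef
    set γ : ℕ → Ed d := fun k => if k = 0 then x else y + intVec d r with hγdef
    have hγ0 : γ 0 = x := by simp [hγdef]
    have hγ1 : γ 1 = y + intVec d r := by simp [hγdef]
    refine ⟨actTilde (Sc S c) 1 γ, ⟨1, le_refl 1, γ, hγ0, ⟨r, by rw [hγ1]; exact add_sub_cancel_left _ _⟩, rfl⟩, ?_⟩
    intro hc
    have hnear : ‖γ 1 - γ 0‖ ≤ Real.sqrt d := by
      apply Stmt17A.norm_le_sqrt
      intro i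
      have h1 : (γ 1 - γ 0) i = y i + ((⌊x i - y i⌋ : ℤ) : ℝ) - x i := by
        rw [PiLp.sub_apply, hγ0, hγ1, PiLp.add_apply]
        show y i + ((⌊x i - y i⌋ : ℤ) : ℝ) - x i = _
        ring
      rw [h1, abs_le]
      constructor
      · linarith [Int.lt_floor_add_one (x i - y i)]
      · linarith [Int.floor_le (x i - y i)]
    have h1 : Sc S c (γ 0, γ 1) ≤ C + κ * Real.sqrt d := hTnear c hc _ _ hnear
    have h2 : actTilde (Sc S c) 1 γ = Sc S c (γ 0, γ 1) - holVal (Sc S c) := by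
      show act (Sc S c) 1 γ - ((1:ℕ):ℝ) * holVal (Sc S c) = _
      unfold act
      rw [Finset.sum_range_one]
      push_cast
      ring
    have h3 := hhol_lb c hc
    rw [h2, hB₁def]
    linarith
  have hPub : ∀ c : Ed d →L[ℝ] ℝ, ‖c‖ ≤ κ → ∀ y : Ed d, manePot (Sc S c) x y ≤ B₁ := by
    intro c hc y
    obtain ⟨v, hv, hvB⟩ := hPmem c y
    rw [hPP c y]
    exact le_trans (csInf_le (hPbdd c hc y) hv) (hvB hc)
  have hPlb : ∀ c : Ed d →L[ℝ] ℝ, ‖c‖ ≤ κ → ∀ y : Ed d, -B₁ ≤ manePot (Sc S c) x y := by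
    intro c hc y
    obtain ⟨v, hv, -⟩ := hPmem c y
    rw [hPP c y]
    exact le_csInf ⟨v, hv⟩ (hPlbset c hc y)
  -- the key one-sided Lipschitz estimate at scale ≤ 1
  have hkey : ∀ c : Ed d →L[ℝ] ℝ, ‖c‖ ≤ κ → ∀ y y' : Ed d, ‖y - y'‖ ≤ 1 →
      manePot (Sc S c) x y ≤ manePot (Sc S c) x y' + (M₂ + κ) * ‖y - y'‖ := by
    intro c hc y y' he
    apply le_of_forall_pos_le_add
    intro ε hε
    set ε' := min ε 1 with hε'def
    have hε'0 : 0 < ε' := lt_min hε one_pos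
    have hε'1 : ε' ≤ 1 := min_le_right _ _
    have hε'ε : ε' ≤ ε := min_le_left _ _
    obtain ⟨v0, hv0, hPne⟩ := hPmem c y'
    obtain ⟨v, hv, hvlt⟩ := Real.lt_sInf_add_pos ⟨v0, hv0⟩ hε'0
    rw [← hPP c y'] at hvlt
    obtain ⟨n, hn, γ, hγ0, ⟨r, hr⟩, rfl⟩ := hv
    obtain ⟨m, rfl⟩ : ∃ m, n = m + 1 := ⟨n - 1, by omega⟩
    have hvub : actTilde (Sc S c) (m+1) γ ≤ B₁ + 1 := by
      have h1 := hPub c hc y'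
      linarith
    -- bound last step of the chain
    have hlast : Sc S c (γ m, γ (m+1)) - holVal (Sc S c) ≤ 2*B₁ + 1 := by
      rcases Nat.eq_zero_or_pos m with hm | hm
      · subst hm
        have h2 : actTilde (Sc S c) 1 γ = Sc S c (γ 0, γ 1) - holVal (Sc S c) := by
          show act (Sc S c) 1 γ - ((1:ℕ):ℝ) * holVal (Sc S c) = _
          unfold act
          rw [Finset.sum_range_one]
          push_cast
          ring
        rw [h2] at hvub
        linarith
      · obtain ⟨k, rfl⟩ : ∃ k, m = k + 1 := ⟨m - 1, by omega⟩
        have h3 : actTilde (Sc S c) (k+1+1) γ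
            = actTilde (Sc S c) (k+1) γ + (Sc S c (γ (k+1), γ (k+1+1)) - holVal (Sc S c)) := by
          show act (Sc S c) (k+1+1) γ - (((k+1+1):ℕ):ℝ) * holVal (Sc S c)
            = (act (Sc S c) (k+1) γ - (((k+1):ℕ):ℝ) * holVal (Sc S c)) + _
          rw [Stmt17A.act_succ]
          push_cast
          ring
        have h4 := hchain c hc (k+1) (by omega) γ
        rw [h3] at hvub
        linarith
    -- the last step has bounded length
    have ht0 : (0:ℝ) ≤ ‖γ (m+1) - γ m‖ := norm_nonneg _
    have h5 := hTlow c hc (γ m) (γ (m+1))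
    have h6 := hhol_ub c hc
    have h7 : A/2 * ‖γ (m+1) - γ m‖^2 ≤ F + D * ‖γ (m+1) - γ m‖ := by
      rw [hFdef]
      linarith
    have hstepR : ‖γ (m+1) - γ m‖ ≤ R := by
      rw [hRdef]
      exact Stmt17A.quad_upper A D F _ hA hD0 hF0 ht0 h7
    -- move the endpoint
    set e : Ed d := y - y' with hedef
    have hmove := Stmt17A.move_bound S hSdiff c M₂ κ R hc
      (fun u v hb => hM₂ u v hb) (γ m) (γ (m+1)) (γ (m+1) + e) hstepR
      (by rw [add_sub_cancel_left]; exact he)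
    rw [add_sub_cancel_left] at hmove
    set γ' : ℕ → Ed d := Function.update γ (m+1) (γ (m+1) + e) with hγ'def
    have hmem' : actTilde (Sc S c) (m+1) γ' ∈ PP c y := by
      refine ⟨m+1, by omega, γ', ?_, ⟨r, ?_⟩, rfl⟩
      · rw [hγ'def, Function.update_of_ne (by omega)]
        exact hγ0
      · rw [hγ'def, Function.update_self]
        have h8 : γ (m+1) + e - y = γ (m+1) - y' := by
          rw [hedef]; abel
        rw [h8]
        exact hr
    have h9 : manePot (Sc S c) x y ≤ actTilde (Sc S c) (m+1) γ' := by
      rw [hPP c y]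
      exact csInf_le (hPbdd c hc y) hmem'
    have h10 : actTilde (Sc S c) (m+1) γ' = actTilde (Sc S c) (m+1) γ
        + (Sc S c (γ m, γ (m+1) + e) - Sc S c (γ m, γ (m+1))) := by
      show act (Sc S c) (m+1) γ' - (((m+1):ℕ):ℝ) * holVal (Sc S c)
        = (act (Sc S c) (m+1) γ - (((m+1):ℕ):ℝ) * holVal (Sc S c)) + _
      rw [hγ'def, Stmt17A.act_update, Stmt17A.act_succ]
      ring
    have h11 := (abs_le.1 hmove).2
    calc manePot (Sc S c) x y ≤ actTilde (Sc S c) (m+1) γ' := h9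
      _ ≤ actTilde (Sc S c) (m+1) γ + (M₂ + κ) * ‖e‖ := by rw [h10]; linarith
      _ ≤ manePot (Sc S c) x y' + ε' + (M₂ + κ) * ‖e‖ := by linarith [hvlt]
      _ ≤ manePot (Sc S c) x y' + (M₂ + κ) * ‖y - y'‖ + ε := by
          rw [hedef]
          linarith
  -- conclusion
  refine ⟨2*B₁ + (M₂ + κ), by positivity, ?_⟩
  intro c hcK y y'
  have hc := hκ c hcK
  have hL₂0 : (0:ℝ) ≤ M₂ + κ := add_nonneg hM₂0 hκ0
  have hn0 : (0:ℝ) ≤ ‖y - y'‖ := norm_nonneg _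
  rcases le_or_gt ‖y - y'‖ 1 with h1 | h1
  · have k1 := hkey c hc y y' h1
    have k2 := hkey c hc y' y (by rwa [norm_sub_rev])
    rw [norm_sub_rev y' y] at k2
    rw [abs_sub_le_iff]
    constructor
    · nlinarith [k1]
    · nlinarith [k2]
  · have j1 := hPub c hc y
    have j2 := hPub c hc y'
    have j3 := hPlb c hc y
    have j4 := hPlb c hc y'
    have j5 : 2*B₁ * 1 ≤ 2*B₁ * ‖y - y'‖ :=
      mul_le_mul_of_nonneg_left h1.le (by positivity)
    rw [abs_sub_le_iff]
    constructor
    · nlinarith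
    · nlinarith

end
end
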